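/- Let G be a minimal non-weakly flat path extendable graph, let P be a witness path for G with witness sets W1 and W2, and let X be a cutset of G such that X ∩ V(P) is nonempty and connected and X ⊆ N[X ∩ V(P)]. Then no connected component of G \ X is anticomplete to X ∩ V(P). -/

import Mathlib

/-!
Suppose a component `C` of `G \ X` is anticomplete to `S = X ∩ V(P)`. Then `C` misses `N[P]`,
so by minimality the witness precover `(W1, W2)` extends to a chordal cover `(X1, X2)` of
`G \ C`. Its trace `(X ∩ X1, X ∩ X2)` on `X = N[S] ∩ (C ∪ X)` is a precover of `G[C ∪ X]`
on the path `S`, which by minimality again extends to a chordal cover `(Y1, Y2)` of `C ∪ X`.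
Then `(X1 ∪ Y1, X2 ∪ Y2)` extends `(W1, W2)` to a chordal cover of `G`, a contradiction: a
hole meeting both `C` and `G \ (C ∪ X)` contains an induced path through `C` whose ends lie
in `N(S) \ S`, and this path closes up through the clique `S` to a hole of `Y1` or `Y2`.
-/

open Classical

universe u

/-- `IsHoleOn G n H`: `H` is the vertex set of an induced cycle of `G` of length `n ≥ 4`. -/
def IsHoleOn {V : Type u} (G : SimpleGraph V) (n : ℕ) (H : Set V) : Prop :=
  4 ≤ n ∧ ∃ f : ZMod n → V, Function.Injective f ∧ Set.range f = H ∧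
    ∀ i j : ZMod n, G.Adj (f i) (f j) ↔ (j = i + 1 ∨ i = j + 1)

/-- A hole: an induced cycle of length at least 4. -/
def IsHole {V : Type u} (G : SimpleGraph V) (H : Set V) : Prop :=
  ∃ n : ℕ, IsHoleOn G n H

/-- No induced cycle of even length. -/
def EvenHoleFree {V : Type u} (G : SimpleGraph V) : Prop :=
  ∀ (n : ℕ) (H : Set V), IsHoleOn G n H → ¬ Even n

/-- `G[X]` is chordal: no hole of `G` is contained in `X`. -/
def ChordalSet {V : Type u} (G : SimpleGraph V) (X : Set V) : Prop :=
  ∀ H : Set V, H ⊆ X → ¬ IsHole G H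

/-- A wheel `(H, w)`: a hole `H` and `w ∉ H` with at least 3 neighbors in `H`. -/
def IsWheel {V : Type u} (G : SimpleGraph V) (H : Set V) (w : V) : Prop :=
  IsHole G H ∧ w ∉ H ∧ 3 ≤ (H ∩ {u | G.Adj w u}).ncard

/-- An induced path of `G`, recorded as the list of its vertices in order. -/
def IsInducedPathList {V : Type u} (G : SimpleGraph V) (l : List V) : Prop :=
  l ≠ [] ∧ l.Nodup ∧
    ∀ (i j : ℕ) (hi : i < l.length) (hj : j < l.length),
      G.Adj (l.get ⟨i, hi⟩) (l.get ⟨j, hj⟩) ↔ (i + 1 = j ∨ j + 1 = i)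

/-- A vertex set that induces a path. -/
def InducesPath {V : Type u} (G : SimpleGraph V) (S : Set V) : Prop :=
  ∃ l : List V, IsInducedPathList G l ∧ {v | v ∈ l} = S

/-- A sector wheel: a wheel `(H, w)` where `w` is complete to `H` or
`N(w) ∩ H` induces a path. -/
def IsSectorWheel {V : Type u} (G : SimpleGraph V) (H : Set V) (w : V) : Prop :=
  IsWheel G H w ∧
    ((∀ u ∈ H, G.Adj w u) ∨ InducesPath G (H ∩ {u | G.Adj w u}))

/-- A twin wheel: a wheel `(H, w)` where `N(w) ∩ H` induces a three-vertex path. -/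
def IsTwinWheel {V : Type u} (G : SimpleGraph V) (H : Set V) (w : V) : Prop :=
  IsWheel G H w ∧ ∃ a b c : V, a ≠ b ∧ b ≠ c ∧ a ≠ c ∧
    H ∩ {u | G.Adj w u} = {a, b, c} ∧ G.Adj a b ∧ G.Adj b c ∧ ¬ G.Adj a c

/-- A short pyramid: a wheel `(H, w)` where `N(w) ∩ H` is an edge plus an isolated vertex. -/
def IsShortPyramid {V : Type u} (G : SimpleGraph V) (H : Set V) (w : V) : Prop :=
  IsWheel G H w ∧ ∃ a b c : V, a ≠ b ∧ b ≠ c ∧ a ≠ c ∧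
    H ∩ {u | G.Adj w u} = {a, b, c} ∧ G.Adj a b ∧ ¬ G.Adj a c ∧ ¬ G.Adj b c

/-- A flat path: an induced path all of whose interior vertices have degree 2 in `G`. -/
def IsFlatPath {V : Type u} (G : SimpleGraph V) (l : List V) : Prop :=
  IsInducedPathList G l ∧
    ∀ (i : ℕ) (hi : i < l.length), 0 < i → i + 1 < l.length →
      ({u | G.Adj (l.get ⟨i, hi⟩) u}).ncard = 2

/-- The closed neighborhood `N[S]` of a set of vertices. -/
def ClosedNbhd {V : Type u} (G : SimpleGraph V) (S : Set V) : Set V :=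
  S ∪ {v | ∃ s ∈ S, G.Adj v s}

/-- `(W1, W2)` (a precover on a path with vertex set `S`) extends to a chordal cover of `G`. -/
def ExtendsToCover {V : Type u} (G : SimpleGraph V) (S W1 W2 : Set V) : Prop :=
  ∃ X1 X2 : Set V, W1 ⊆ X1 ∧ W2 ⊆ X2 ∧ ChordalSet G X1 ∧ ChordalSet G X2 ∧
    X1 ∩ X2 = S ∧ X1 ∪ X2 = Set.univ

/-- Flat path extendable. -/
def FPE {V : Type u} (G : SimpleGraph V) : Prop :=
  ∀ l : List V, IsFlatPath G l →
    ∀ W1 W2 : Set V, ChordalSet G W1 → ChordalSet G W2 →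
      W1 ∩ W2 = {v | v ∈ l} → W1 ∪ W2 = ClosedNbhd G {v | v ∈ l} →
      ExtendsToCover G {v | v ∈ l} W1 W2

/-- Weakly flat path extendable: only paths with at most two vertices are considered. -/
def WeaklyFPE {V : Type u} (G : SimpleGraph V) : Prop :=
  ∀ l : List V, IsInducedPathList G l → l.length ≤ 2 →
    ∀ W1 W2 : Set V, ChordalSet G W1 → ChordalSet G W2 →
      W1 ∩ W2 = {v | v ∈ l} → W1 ∪ W2 = ClosedNbhd G {v | v ∈ l} →
      ExtendsToCover G {v | v ∈ l} W1 W2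

/-- Minimal non flat path extendable. -/
def MNFPE {V : Type u} (G : SimpleGraph V) : Prop :=
  ¬ FPE G ∧ ∀ S : Set V, S ≠ Set.univ → FPE (G.induce S)

/-- Minimal non-weakly flat path extendable. -/
def MinNonWeaklyFPE {V : Type u} (G : SimpleGraph V) : Prop :=
  ¬ WeaklyFPE G ∧ ∀ S : Set V, S ≠ Set.univ → WeaklyFPE (G.induce S)

/-- A witness path `l` with witness sets `W1, W2`: a precover on a flat path
admitting no extension to a chordal cover. -/
def WitnessPath {V : Type u} (G : SimpleGraph V) (l : List V) (W1 W2 : Set V) : Prop :=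
  IsFlatPath G l ∧ ChordalSet G W1 ∧ ChordalSet G W2 ∧
    W1 ∩ W2 = {v | v ∈ l} ∧ W1 ∪ W2 = ClosedNbhd G {v | v ∈ l} ∧
    ¬ ExtendsToCover G {v | v ∈ l} W1 W2

/-- A witness path of length zero or one with witness sets, for the weak notion. -/
def WeakWitness {V : Type u} (G : SimpleGraph V) (l : List V) (W1 W2 : Set V) : Prop :=
  IsInducedPathList G l ∧ l.length ≤ 2 ∧ ChordalSet G W1 ∧ ChordalSet G W2 ∧
    W1 ∩ W2 = {v | v ∈ l} ∧ W1 ∪ W2 = ClosedNbhd G {v | v ∈ l} ∧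
    ¬ ExtendsToCover G {v | v ∈ l} W1 W2

/-- `N(v)` is the union of a clique and a singleton. -/
def NearlySimplicial {V : Type u} (G : SimpleGraph V) (v : V) : Prop :=
  ∃ (K : Set V) (u : V), G.IsClique K ∧ {w | G.Adj v w} = K ∪ {u}

/-- `G` has a star cutset. -/
def HasStarCutset {V : Type u} (G : SimpleGraph V) : Prop :=
  G.Connected ∧ ∃ (v : V) (C : Set V), v ∈ C ∧ C ⊆ insert v {u | G.Adj v u} ∧
    ¬ (G.induce (Cᶜ : Set V)).Connected

/-- `v` is the center of a star cutset of `G`. -/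
def IsStarCutsetCenter {V : Type u} (G : SimpleGraph V) (v : V) : Prop :=
  G.Connected ∧ ∃ C : Set V, v ∈ C ∧ C ⊆ insert v {u | G.Adj v u} ∧
    ¬ (G.induce (Cᶜ : Set V)).Connected

/-- `G` has a full star cutset, i.e. a star cutset of the form `N[v]`. -/
def HasFullStarCutset {V : Type u} (G : SimpleGraph V) : Prop :=
  G.Connected ∧ ∃ v : V,
    ¬ (G.induce (((insert v {u | G.Adj v u}) : Set V)ᶜ)).Connected

/-- A clique cutset. -/
def IsCliqueCutset {V : Type u} (G : SimpleGraph V) (Q : Set V) : Prop :=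
  G.IsClique Q ∧ ¬ (G.induce (Qᶜ : Set V)).Connected

/-- `C` is (the vertex set of) a connected component of `G[S]`. -/
def IsCompOf {V : Type u} (G : SimpleGraph V) (S C : Set V) : Prop :=
  ∃ comp : (G.induce S).ConnectedComponent, C = Subtype.val '' comp.supp

/-- A marker path for the side `(A, C, B)` of a 2-join, with ends `a ∈ A` and `b ∈ B`
and interior in `C`. -/
def IsMarkerPath {V : Type u} (G : SimpleGraph V) (A C B : Set V) (a b : V)
    (l : List V) : Prop :=
  IsInducedPathList G l ∧ a ∈ A ∧ b ∈ B ∧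
    ∃ m : List V, l = a :: (m ++ [b]) ∧ ∀ v ∈ m, v ∈ C

/-- A 2-join of `G`. -/
def IsTwoJoin {V : Type u} (G : SimpleGraph V) (A1 C1 B1 A2 C2 B2 : Set V) : Prop :=
  ([A1, C1, B1, A2, C2, B2] : List (Set V)).Pairwise Disjoint ∧
  A1 ∪ C1 ∪ B1 ∪ A2 ∪ C2 ∪ B2 = Set.univ ∧
  (∀ a ∈ A1, ∀ b ∈ A2, G.Adj a b) ∧
  (∀ a ∈ B1, ∀ b ∈ B2, G.Adj a b) ∧
  (∀ u ∈ A1 ∪ C1 ∪ B1, ∀ v ∈ A2 ∪ C2 ∪ B2, G.Adj u v →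
    ((u ∈ A1 ∧ v ∈ A2) ∨ (u ∈ B1 ∧ v ∈ B2))) ∧
  (∃ (a b : V) (l : List V), IsMarkerPath G A1 C1 B1 a b l ∧
      A1 ∪ C1 ∪ B1 ≠ {v | v ∈ l}) ∧
  (∃ (a b : V) (l : List V), IsMarkerPath G A2 C2 B2 a b l ∧
      A2 ∪ C2 ∪ B2 ≠ {v | v ∈ l})

/-- A leaf of a graph: a vertex of degree one. -/
def IsLeaf {V : Type u} (T : SimpleGraph V) (v : V) : Prop :=
  ({u | T.Adj v u}).ncard = 1

/-- The graph `B(T)` built from a tree `T` whose bipartition is given by the proper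
2-coloring `c`: vertices are the edges of `T` plus two extra vertices `x_false, x_true`
(encoded as `Bool`); two edges are adjacent iff they share an endpoint, `x_i` is adjacent
to the pendant edge at each leaf on side `i`, and `x_false` is adjacent to `x_true`. -/
def BGraph {V : Type u} (T : SimpleGraph V) (c : V → Bool) :
    SimpleGraph (↥T.edgeSet ⊕ Bool) :=
  SimpleGraph.fromRel fun a b =>
    match a, b with
    | Sum.inl e, Sum.inl f => ∃ v : V, v ∈ e.val ∧ v ∈ f.val
    | Sum.inl e, Sum.inr i => ∃ v : V, IsLeaf T v ∧ c v = i ∧ v ∈ e.val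
    | Sum.inr _, Sum.inl _ => False
    | Sum.inr _, Sum.inr _ => True

section

open Set

variable {V : Type u} {G : SimpleGraph V}

theorem ZMod.eq_add_one_iff_val {n : ℕ} [NeZero n] (a b : ZMod n) :
    b = a + 1 ↔ b.val = a.val + 1 ∨ (b.val = 0 ∧ a.val + 1 = n) := by
  have ha := ZMod.val_lt a
  have hb := ZMod.val_lt b
  rw [← (ZMod.val_injective n).eq_iff, ZMod.val_add, ZMod.val_one_eq_one_mod, Nat.add_mod_mod]
  rcases (show a.val + 1 ≤ n by omega).lt_or_eq with hlt | heq
  · rw [Nat.mod_eq_of_lt hlt]; omega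
  · rw [heq, Nat.mod_self]; omega

theorem Nat.exists_maximal_interval {Q : ℕ → Prop} {p : ℕ} (h0 : ¬ Q 0) (hp : Q p)
    (hout : ∃ b, p < b ∧ ¬ Q b) :
    ∃ a b, a < p ∧ p < b ∧ ¬ Q a ∧ ¬ Q b ∧ ∀ t, a < t → t < b → Q t := by
  classical
  set a := Nat.findGreatest (fun a => ¬ Q a) p
  have ha : ¬ Q a := Nat.findGreatest_spec (P := fun a => ¬ Q a) (Nat.zero_le p) h0
  refine ⟨a, Nat.find hout, lt_of_le_of_ne (Nat.findGreatest_le p) fun h => ha (h ▸ hp),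
    (Nat.find_spec hout).1, ha, (Nat.find_spec hout).2, fun t hat htb => ?_⟩
  by_cases htp : t ≤ p
  · exact not_not.1 (Nat.findGreatest_is_greatest hat htp)
  · by_contra hQ
    exact Nat.find_min hout htb ⟨by omega, hQ⟩

-- `ℕ`-indexed holes and induced paths, which are easier to cut and splice than `ZMod n`-indexed
-- ones.
def IsInducedCycleSeq (G : SimpleGraph V) (n : ℕ) (h : ℕ → V) : Prop :=
  InjOn h (Iio n) ∧ ∀ a < n, ∀ b < n,
    (G.Adj (h a) (h b) ↔ b = a + 1 ∨ a = b + 1 ∨ (a = 0 ∧ b + 1 = n) ∨ (b = 0 ∧ a + 1 = n))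

def IsInducedPathSeq (G : SimpleGraph V) (k : ℕ) (g : ℕ → V) : Prop :=
  InjOn g (Iic k) ∧ ∀ a ≤ k, ∀ b ≤ k, (G.Adj (g a) (g b) ↔ b = a + 1 ∨ a = b + 1)

theorem isHoleOn_of_isInducedCycleSeq {n : ℕ} {h : ℕ → V} (hn : 4 ≤ n)
    (hh : IsInducedCycleSeq G n h) : IsHoleOn G n (h '' Iio n) := by
  have : NeZero n := ⟨by omega⟩
  refine ⟨hn, fun i => h i.val,
    fun i j hij => ZMod.val_injective n (hh.1 (ZMod.val_lt i) (ZMod.val_lt j) hij), ?_,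
    fun i j => ?_⟩
  · ext v
    constructor
    · rintro ⟨i, rfl⟩
      exact ⟨i.val, ZMod.val_lt i, rfl⟩
    · rintro ⟨a, ha, rfl⟩
      exact ⟨a, by simp only [ZMod.val_cast_of_lt ha]⟩
  · rw [hh.2 _ (ZMod.val_lt i) _ (ZMod.val_lt j), ZMod.eq_add_one_iff_val,
      ZMod.eq_add_one_iff_val]
    omega

theorem IsHoleOn.exists_isInducedCycleSeq {n : ℕ} {H : Set V} (hH : IsHoleOn G n H) {v : V}
    (hv : v ∈ H) : ∃ h : ℕ → V, IsInducedCycleSeq G n h ∧ h '' Iio n = H ∧ h 0 = v := by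
  obtain ⟨hn, f, hinj, rfl, hadj⟩ := hH
  obtain ⟨i₀, rfl⟩ := hv
  have : NeZero n := ⟨by omega⟩
  refine ⟨fun t => f (i₀ + t), ⟨fun x hx y hy hxy => ?_, fun x hx y hy => ?_⟩, ?_, by simp⟩
  · simpa [ZMod.val_cast_of_lt (mem_Iio.1 hx), ZMod.val_cast_of_lt (mem_Iio.1 hy)] using
      congrArg ZMod.val (add_left_cancel (hinj hxy))
  · rw [hadj, add_assoc, add_assoc, add_right_inj, add_right_inj, ZMod.eq_add_one_iff_val,
      ZMod.eq_add_one_iff_val, ZMod.val_cast_of_lt hx, ZMod.val_cast_of_lt hy]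
    omega
  · ext w
    constructor
    · rintro ⟨t, -, rfl⟩
      exact mem_range_self _
    · rintro ⟨j, rfl⟩
      exact ⟨(j - i₀).val, ZMod.val_lt _, by simp⟩

theorem IsInducedCycleSeq.isInducedPathSeq_shift {n a b : ℕ} {h : ℕ → V}
    (hh : IsInducedCycleSeq G n h) (ha : 0 < a) (hab : a ≤ b) (hb : b < n) :
    IsInducedPathSeq G (b - a) (fun t => h (a + t)) := by
  refine ⟨fun x hx y hy hxy => ?_, fun x hx y hy => ?_⟩
  · rw [mem_Iic] at hx hy
    have := hh.1 (show a + x < n by omega) (show a + y < n by omega) hxy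
    omega
  · rw [hh.2 (a + x) (by omega) (a + y) (by omega)]
    omega

theorem IsHoleOn.exists_arc {n : ℕ} {H C X : Set V} (hH : IsHoleOn G n H)
    (hbd : ∀ u ∈ C, ∀ w ∉ X, G.Adj u w → w ∈ C) {u v : V} (hu : u ∈ H) (huC : u ∈ C)
    (hv : v ∈ H) (hvC : v ∉ C) (hvX : v ∉ X) :
    ∃ k g, 2 ≤ k ∧ IsInducedPathSeq G k g ∧ (∀ t ≤ k, g t ∈ H) ∧
      g 0 ∈ X ∧ g k ∈ X ∧ ∀ t, 0 < t → t < k → g t ∈ C := by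
  obtain ⟨h, hh, rfl, rfl⟩ := hH.exists_isInducedCycleSeq hv
  obtain ⟨p, hp, rfl⟩ := hu
  rw [mem_Iio] at hp
  obtain ⟨a, b, hap, hpb, ha, hb, hab⟩ :=
    Nat.exists_maximal_interval (Q := fun t => t < n ∧ h t ∈ C) (fun h0 => hvC h0.2)
      ⟨hp, huC⟩ ⟨n, hp, fun hn => lt_irrefl n hn.1⟩
  have hbn : b ≤ n := by
    by_contra
    exact lt_irrefl n (hab n (by omega) (by omega)).1
  have hX : ∀ s < n, ∀ t < n, h s ∈ C → h t ∉ C → G.Adj (h s) (h t) → h t ∈ X :=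
    fun s _ t _ hs ht hadj => by_contra fun hx => ht (hbd _ hs _ hx hadj)
  have hbn : b < n := by
    refine lt_of_le_of_ne hbn fun hbn => hvX ?_
    exact hX (b - 1) (by omega) 0 (by omega) (hab (b - 1) (by omega) (by omega)).2 hvC
      ((hh.2 _ (by omega) _ (by omega)).2 (by omega))
  have haC : h a ∉ C := fun hC => ha ⟨by omega, hC⟩
  have hbC : h b ∉ C := fun hC => hb ⟨hbn, hC⟩
  have haX : h a ∈ X := hX (a + 1) (by omega) a (by omega) (hab (a + 1) (by omega) (by omega)).2
    haC ((hh.2 _ (by omega) _ (by omega)).2 (by omega))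
  have hbX : h b ∈ X := hX (b - 1) (by omega) b hbn (hab (b - 1) (by omega) (by omega)).2
    hbC ((hh.2 _ (by omega) _ (by omega)).2 (by omega))
  have ha0 : 0 < a := Nat.pos_of_ne_zero fun ha0 => hvX (ha0 ▸ haX)
  refine ⟨b - a, fun t => h (a + t), by omega, hh.isInducedPathSeq_shift ha0 (by omega) hbn,
    fun t ht => mem_image_of_mem _ (show a + t < n by omega), by simpa using haX,
    ?_, fun t ht htk => (hab (a + t) (by omega) (by omega)).2⟩
  show h (a + (b - a)) ∈ X
  rw [Nat.add_sub_cancel' (by omega)]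
  exact hbX

theorem IsInducedPathSeq.cons {k : ℕ} {g : ℕ → V} {v : V} (hg : IsInducedPathSeq G k g)
    (hv : ∀ t ≤ k, v ≠ g t) (h0 : G.Adj v (g 0))
    (hnadj : ∀ t, 0 < t → t ≤ k → ¬ G.Adj v (g t)) :
    IsInducedPathSeq G (k + 1) (fun t => if t = 0 then v else g (t - 1)) := by
  have hvadj : ∀ t ≤ k, G.Adj v (g t) ↔ t = 0 := fun t ht =>
    ⟨fun hadj => by_contra fun ht0 => hnadj t (by omega) ht hadj, by rintro rfl; exact h0⟩
  refine ⟨fun x hx y hy hxy => ?_, fun x hx y hy => ?_⟩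
  · rw [mem_Iic] at hx hy
    dsimp only at hxy
    split_ifs at hxy with hx0 hy0 hy0
    · omega
    · exact absurd hxy (hv (y - 1) (by omega))
    · exact absurd hxy.symm (hv (x - 1) (by omega))
    · have := hg.1 (show x - 1 ≤ k by omega) (show y - 1 ≤ k by omega) hxy
      omega
  · dsimp only
    split_ifs with hx0 hy0 hy0
    · simp only [SimpleGraph.irrefl, false_iff]
      omega
    · rw [hvadj (y - 1) (by omega)]
      omega
    · rw [G.adj_comm, hvadj (x - 1) (by omega)]
      omega
    · rw [hg.2 (x - 1) (by omega) (y - 1) (by omega)]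
      omega

theorem IsInducedPathSeq.isHole_insert {k : ℕ} {g : ℕ → V} {v : V}
    (hg : IsInducedPathSeq G k g) (hk : 2 ≤ k) (hv : ∀ t ≤ k, v ≠ g t) (h0 : G.Adj v (g 0))
    (hk' : G.Adj v (g k)) (hnadj : ∀ t, 0 < t → t < k → ¬ G.Adj v (g t)) :
    IsHole G (insert v (g '' Iic k)) := by
  have hvadj : ∀ t ≤ k, G.Adj v (g t) ↔ t = 0 ∨ t = k := fun t ht =>
    ⟨fun hadj => by_contra fun ht' => hnadj t (by omega) (by omega) hadj,
      by rintro (rfl | rfl) <;> assumption⟩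
  set h : ℕ → V := fun t => if t = k + 1 then v else g t
  have himage : h '' Iio (k + 2) = insert v (g '' Iic k) := by
    ext w
    constructor
    · rintro ⟨t, ht, rfl⟩
      by_cases htk : t = k + 1
      · simp [h, htk]
      · exact Or.inr ⟨t, by rw [mem_Iio] at ht; rw [mem_Iic]; omega, by simp [h, htk]⟩
    · rintro (rfl | ⟨t, ht, rfl⟩)
      · exact ⟨k + 1, by simp, by simp [h]⟩
      · rw [mem_Iic] at ht
        exact ⟨t, by rw [mem_Iio]; omega, by simp [h]; omega⟩
  refine ⟨k + 2, himage ▸ isHoleOn_of_isInducedCycleSeq (by omega) ⟨?_, fun x hx y hy => ?_⟩⟩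
  · intro x hx y hy hxy
    rw [mem_Iio] at hx hy
    simp only [h] at hxy
    split_ifs at hxy with hxk hyk hyk
    · omega
    · exact absurd hxy (hv y (by omega))
    · exact absurd hxy.symm (hv x (by omega))
    · exact hg.1 (show x ≤ k by omega) (show y ≤ k by omega) hxy
  · simp only [h]
    split_ifs with hxk hyk hyk
    · simp only [SimpleGraph.irrefl, false_iff]
      omega
    · rw [hvadj y (by omega)]
      omega
    · rw [G.adj_comm, hvadj x (by omega)]
      omega
    · rw [hg.2 x (by omega) y (by omega)]
      omega

theorem IsInducedPathSeq.exists_hole_through_clique {S : Set V} (hS : G.IsClique S) {k : ℕ}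
    {g : ℕ → V} (hg : IsInducedPathSeq G k g) (hk : 2 ≤ k) (hgS : ∀ t ≤ k, g t ∉ S)
    (hanti : ∀ t, 0 < t → t < k → ∀ s ∈ S, ¬ G.Adj (g t) s)
    (h0 : ∃ s ∈ S, G.Adj (g 0) s) (hk' : ∃ s ∈ S, G.Adj (g k) s) :
    ∃ H ⊆ S ∪ g '' Iic k, IsHole G H := by
  have hne : ∀ s ∈ S, ∀ t ≤ k, s ≠ g t := fun s hs t ht hst => hgS t ht (hst ▸ hs)
  -- Close the path through a common neighbour of its ends in `S`, or else through two.
  by_cases hcommon : ∃ s ∈ S, G.Adj (g 0) s ∧ G.Adj (g k) s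
  · obtain ⟨s, hs, hs0, hsk⟩ := hcommon
    exact ⟨_, insert_subset (Or.inl hs) subset_union_right, hg.isHole_insert hk (hne s hs)
      hs0.symm hsk.symm fun t ht htk hadj => hanti t ht htk s hs hadj.symm⟩
  push Not at hcommon
  obtain ⟨s₀, hs₀, hadj₀⟩ := h0
  obtain ⟨s₁, hs₁, hadj₁⟩ := hk'
  have hs₀k : ¬ G.Adj (g k) s₀ := hcommon s₀ hs₀ hadj₀
  have hs₁0 : ¬ G.Adj (g 0) s₁ := fun hadj => hcommon s₁ hs₁ hadj hadj₁
  have hs : s₀ ≠ s₁ := by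
    rintro rfl
    exact hs₀k hadj₁
  have hg' := hg.cons (hne s₀ hs₀) hadj₀.symm fun t ht htk hadj => by
    rcases htk.lt_or_eq with htk | rfl
    · exact hanti t ht htk s₀ hs₀ hadj.symm
    · exact hs₀k hadj.symm
  refine ⟨_, ?_, hg'.isHole_insert (by omega) (fun t ht => ?_) (by simpa using hS hs₁ hs₀ hs.symm)
    (by simpa using hadj₁.symm) fun t ht htk => ?_⟩
  · rintro w (rfl | ⟨t, ht, rfl⟩)
    · exact Or.inl hs₁
    · dsimp only
      split_ifs
      · exact Or.inl hs₀
      · exact Or.inr ⟨t - 1, by rw [mem_Iic] at ht ⊢; omega, rfl⟩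
  · split_ifs
    · exact hs.symm
    · exact hne s₁ hs₁ (t - 1) (by omega)
  · rw [if_neg (by omega)]
    intro hadj
    rcases (show t - 1 = 0 ∨ 0 < t - 1 by omega) with ht0 | ht0
    · exact hs₁0 (ht0 ▸ hadj.symm)
    · exact hanti (t - 1) ht0 (by omega) s₁ hs₁ hadj.symm

theorem ChordalSet.subset {X Y : Set V} (hX : ChordalSet G X) (hYX : Y ⊆ X) : ChordalSet G Y :=
  fun H hH => hX H (hH.trans hYX)

theorem ChordalSet.preimage_val {T Y : Set V} (h : ChordalSet G Y) :
    ChordalSet (G.induce T) (Subtype.val ⁻¹' Y) := by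
  rintro H hH ⟨n, hn, f, hinj, rfl, hadj⟩
  refine h (Subtype.val '' range f) (image_subset_iff.2 hH) ⟨n, hn, fun i => f i,
    Subtype.val_injective.comp hinj, by rw [range_comp'], hadj⟩

theorem ChordalSet.image_val {T : Set V} {Y : Set T} (h : ChordalSet (G.induce T) Y) :
    ChordalSet G (Subtype.val '' Y) := by
  rintro H hH ⟨n, hn, f, hinj, rfl, hadj⟩
  have hT : ∀ i, f i ∈ T := fun i => by
    obtain ⟨a, -, ha⟩ := hH (mem_range_self i)
    exact ha ▸ a.2
  refine h (range fun i => (⟨f i, hT i⟩ : T)) ?_ ⟨n, hn, _,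
    fun i j hij => hinj (congrArg Subtype.val hij), rfl, hadj⟩
  rintro _ ⟨i, rfl⟩
  obtain ⟨a, ha, hai⟩ := hH (mem_range_self i)
  obtain rfl : a = ⟨f i, hT i⟩ := Subtype.ext hai
  exact ha

theorem IsInducedPathList.pmap_subtype {T : Set V} {l : List V} (hl : IsInducedPathList G l)
    (hlT : ∀ v ∈ l, v ∈ T) : IsInducedPathList (G.induce T) (l.pmap Subtype.mk hlT) := by
  obtain ⟨hne, hnd, hadj⟩ := hl
  refine ⟨by simpa using hne, hnd.pmap fun _ _ _ _ => congrArg Subtype.val, fun i j hi hj => ?_⟩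
  simp only [List.get_eq_getElem, List.getElem_pmap, SimpleGraph.comap_adj,
    Function.Embedding.subtype_apply]
  exact hadj i j (by simpa using hi) (by simpa using hj)

theorem closedNbhd_induce {T P : Set V} (hP : P ⊆ T) :
    ClosedNbhd (G.induce T) (Subtype.val ⁻¹' P) = Subtype.val ⁻¹' ClosedNbhd G P := by
  ext v
  simp only [ClosedNbhd, mem_union, mem_preimage, mem_ofPred_eq]
  constructor
  · rintro (h | ⟨s, hs, hadj⟩)
    · exact Or.inl h
    · exact Or.inr ⟨s, hs, hadj⟩
  · rintro (h | ⟨s, hs, hadj⟩)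
    · exact Or.inl h
    · exact Or.inr ⟨⟨s, hP hs⟩, hs, hadj⟩

theorem isInducedPathList_iff_of_length_le_two {l : List V} (hlen : l.length ≤ 2) :
    IsInducedPathList G l ↔ l ≠ [] ∧ l.Nodup ∧ G.IsClique {v | v ∈ l} := by
  refine ⟨fun ⟨hne, hnd, hadj⟩ => ⟨hne, hnd, ?_⟩, fun ⟨hne, hnd, hcl⟩ => ⟨hne, hnd, ?_⟩⟩
  · intro a ha b hb hab
    obtain ⟨i, rfl⟩ := List.mem_iff_get.1 ha
    obtain ⟨j, rfl⟩ := List.mem_iff_get.1 hb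
    have hij : i.val ≠ j.val := fun h => hab (congrArg l.get (Fin.ext h))
    exact (hadj i j i.2 j.2).2 (by omega)
  · intro i j hi hj
    by_cases hij : i = j
    · subst hij
      simp only [SimpleGraph.irrefl, false_iff]
      omega
    · have hne : l.get ⟨i, hi⟩ ≠ l.get ⟨j, hj⟩ := by
        rw [Ne, hnd.get_inj_iff, Fin.mk.injEq]
        exact hij
      exact iff_of_true (hcl (List.get_mem _ _) (List.get_mem _ _) hne) (by omega)

theorem IsInducedPathList.isClique {l : List V} (hl : IsInducedPathList G l)
    (hlen : l.length ≤ 2) : G.IsClique {v | v ∈ l} :=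
  ((isInducedPathList_iff_of_length_le_two hlen).1 hl).2.2

theorem IsInducedPathList.exists_of_subset {l : List V} (hl : IsInducedPathList G l)
    (hlen : l.length ≤ 2) {S : Set V} (hSl : S ⊆ {v | v ∈ l}) (hS : S.Nonempty) :
    ∃ l', IsInducedPathList G l' ∧ l'.length ≤ 2 ∧ {v | v ∈ l'} = S := by
  obtain ⟨-, hnd, hcl⟩ := (isInducedPathList_iff_of_length_le_two hlen).1 hl
  obtain ⟨v, hv⟩ := hS
  have hlen' := (List.length_filter_le (· ∈ S) l).trans hlen
  refine ⟨l.filter (· ∈ S), (isInducedPathList_iff_of_length_le_two hlen').2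
    ⟨List.ne_nil_of_mem (List.mem_filter.2 ⟨hSl hv, by simpa using hv⟩), hnd.filter _,
      hcl.subset fun w hw => (List.mem_filter.1 hw).1⟩, hlen', ?_⟩
  ext w
  simpa using fun hw => hSl hw

theorem WeaklyFPE.exists_cover_of_induce {T : Set V} (hT : WeaklyFPE (G.induce T))
    {S : Set V} (hS : ∃ l, IsInducedPathList G l ∧ l.length ≤ 2 ∧ {v | v ∈ l} = S)
    (hST : S ⊆ T) {W₁ W₂ : Set V} (hW₁ : ChordalSet G W₁) (hW₂ : ChordalSet G W₂)
    (hi : W₁ ∩ W₂ = S) (hu : W₁ ∪ W₂ = T ∩ ClosedNbhd G S) :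
    ∃ X₁ X₂, W₁ ⊆ X₁ ∧ W₂ ⊆ X₂ ∧ ChordalSet G X₁ ∧ ChordalSet G X₂ ∧
      X₁ ∩ X₂ = S ∧ X₁ ∪ X₂ = T := by
  obtain ⟨l, hl, hlen, rfl⟩ := hS
  have hlT : ∀ v ∈ l, v ∈ T := hST
  have hWT : W₁ ∪ W₂ ⊆ T := hu ▸ inter_subset_left
  have hlset : {v : T | v ∈ l.pmap Subtype.mk hlT} = Subtype.val ⁻¹' {v | v ∈ l} := by
    ext v
    rw [mem_preimage, mem_ofPred_eq, mem_ofPred_eq, List.mem_pmap]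
    exact ⟨fun ⟨a, ha, hav⟩ => hav ▸ ha, fun hv => ⟨v, hv, rfl⟩⟩
  obtain ⟨Z₁, Z₂, hWZ₁, hWZ₂, hZ₁, hZ₂, hZi, hZu⟩ := hT _ (hl.pmap_subtype hlT)
    (by simpa using hlen) _ _ hW₁.preimage_val hW₂.preimage_val
    (by rw [← preimage_inter, hi, hlset])
    (by rw [← preimage_union, hu, hlset, closedNbhd_induce hST, Subtype.preimage_coe_self_inter])
  refine ⟨Subtype.val '' Z₁, Subtype.val '' Z₂, fun w hw => ⟨⟨w, hWT (Or.inl hw)⟩, hWZ₁ hw, rfl⟩,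
    fun w hw => ⟨⟨w, hWT (Or.inr hw)⟩, hWZ₂ hw, rfl⟩, hZ₁.image_val, hZ₂.image_val, ?_, ?_⟩
  · rw [← image_inter Subtype.val_injective, hZi, hlset, image_preimage_eq_inter_range,
      Subtype.range_coe, inter_eq_left.2 hST]
  · rw [← image_union, hZu, image_univ, Subtype.range_coe]

namespace IsCompOf

variable {S C : Set V}

theorem subset (hC : IsCompOf G S C) : C ⊆ S := by
  obtain ⟨c, rfl⟩ := hC
  rintro _ ⟨x, -, rfl⟩
  exact x.2

theorem nonempty (hC : IsCompOf G S C) : C.Nonempty := by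
  obtain ⟨c, rfl⟩ := hC
  exact c.nonempty_supp.image _

theorem mem_of_adj (hC : IsCompOf G S C) {u w : V} (hu : u ∈ C) (hw : w ∈ S)
    (hadj : G.Adj u w) : w ∈ C := by
  obtain ⟨c, rfl⟩ := hC
  obtain ⟨x, hx, rfl⟩ := hu
  exact ⟨⟨w, hw⟩, (c.mem_supp_congr_adj (G := G.induce S) (w := ⟨w, hw⟩) hadj).1 hx, rfl⟩

theorem exists_notMem (hC : IsCompOf G S C) (hS : ¬ (G.induce S).Connected) :
    ∃ w ∈ S, w ∉ C := by
  obtain ⟨c, rfl⟩ := hC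
  by_contra! hall
  have hmem : ∀ x : S, x ∈ c.supp := fun x => by
    obtain ⟨y, hy, hyx⟩ := hall x x.2
    exact Subtype.ext hyx ▸ hy
  obtain ⟨x, -⟩ := c.nonempty_supp
  exact hS ((SimpleGraph.connected_iff _).2 ⟨fun x y => SimpleGraph.ConnectedComponent.exact
    (((c.mem_supp_iff x).1 (hmem x)).trans ((c.mem_supp_iff y).1 (hmem y)).symm), ⟨x⟩⟩)

end IsCompOf

theorem closedNbhd_subset_compl {C X P : Set V} (hP : G.IsClique P) (hCX : C ⊆ Xᶜ)
    (hbd : ∀ u ∈ C, ∀ w ∉ X, G.Adj u w → w ∈ C) (hanti : ∀ u ∈ C, ∀ w ∈ X ∩ P, ¬ G.Adj u w)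
    (hXP : (X ∩ P).Nonempty) : ClosedNbhd G P ⊆ Cᶜ := by
  obtain ⟨s, hsX, hsP⟩ := hXP
  have hPC : ∀ v ∈ P, v ∉ C := fun v hv hvC =>
    hanti v hvC s ⟨hsX, hsP⟩ (hP hv hsP fun h => hCX hvC (h ▸ hsX))
  rintro v (hv | ⟨w, hw, hvw⟩) hvC
  · exact hPC v hv hvC
  · by_cases hwX : w ∈ X
    · exact hanti v hvC w ⟨hwX, hw⟩ hvw
    · exact hPC w hw (hbd v hvC w hwX hvw)

theorem union_inter_closedNbhd_eq {C X S : Set V} (hCX : C ⊆ Xᶜ) (hSX : S ⊆ X)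
    (hanti : ∀ u ∈ C, ∀ w ∈ S, ¬ G.Adj u w) (hXS : X ⊆ ClosedNbhd G S) :
    (C ∪ X) ∩ ClosedNbhd G S = X := by
  refine subset_antisymm (fun v ⟨hv, hvN⟩ => hv.resolve_left fun hvC => ?_)
    fun v hv => ⟨Or.inr hv, hXS hv⟩
  rcases hvN with hvS | ⟨s, hs, hadj⟩
  · exact hCX hvC (hSX hvS)
  · exact hanti v hvC s hs hadj

/-- A hole of `A ∪ B` inside `Cᶜ` lies in `A`, and one inside `C ∪ X` lies in `B`. Any other
hole crosses `C` along an induced path with ends in `X \ S`; as `X ⊆ N[S]`, this path closes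
up through the clique `S` to a hole of `B`. -/
theorem chordalSet_union_of_separation {C X S A B : Set V} (hS : G.IsClique S) (hSX : S ⊆ X)
    (hCX : C ⊆ Xᶜ) (hbd : ∀ u ∈ C, ∀ w ∉ X, G.Adj u w → w ∈ C)
    (hanti : ∀ u ∈ C, ∀ w ∈ S, ¬ G.Adj u w) (hXS : X ⊆ ClosedNbhd G S)
    (hA : ChordalSet G A) (hB : ChordalSet G B) (hAC : A ⊆ Cᶜ) (hBCX : B ⊆ C ∪ X)
    (hAB : X ∩ A = X ∩ B) (hSB : S ⊆ B) : ChordalSet G (A ∪ B) := by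
  rintro H hH ⟨n, hHn⟩
  by_cases hmeet : ∃ u ∈ H, u ∈ C
  swap
  · push Not at hmeet
    refine hA H (fun w hw => (hH hw).elim id fun hwB => ?_) ⟨n, hHn⟩
    exact (hAB.symm ▸ ⟨(hBCX hwB).resolve_left (hmeet w hw), hwB⟩ : w ∈ X ∩ A).2
  by_cases hout : ∃ v ∈ H, v ∉ C ∧ v ∉ X
  swap
  · push Not at hout
    refine hB H (fun w hw => (hH hw).elim (fun hwA => ?_) id) ⟨n, hHn⟩
    exact (hAB ▸ ⟨hout w hw (hAC hwA), hwA⟩ : w ∈ X ∩ B).2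
  obtain ⟨u, hu, huC⟩ := hmeet
  obtain ⟨v, hv, hvC, hvX⟩ := hout
  obtain ⟨k, g, hk, hg, hgH, h0X, hkX, hgC⟩ :=
    hHn.exists_arc hbd hu huC hv hvC hvX
  have hgX : ∀ t ≤ k, g t ∉ C → g t ∈ X := fun t ht htC => by
    rcases (show t = 0 ∨ t = k ∨ (0 < t ∧ t < k) by omega) with rfl | rfl | ⟨ht0, htk⟩
    · exact h0X
    · exact hkX
    · exact absurd (hgC t ht0 htk) htC
  have hgB : ∀ t ≤ k, g t ∈ B := fun t ht => (hH (hgH t ht)).elim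
    (fun hA' => (hAB ▸ ⟨hgX t ht (hAC hA'), hA'⟩ : g t ∈ X ∩ B).2) id
  have hgC' : ∀ t ≤ k, g t ∈ C ∨ ∃ c ∈ C, G.Adj c (g t) := fun t ht => by
    rcases (show t = 0 ∨ t = k ∨ (0 < t ∧ t < k) by omega) with rfl | rfl | ⟨ht0, htk⟩
    · exact Or.inr ⟨g 1, hgC 1 (by omega) (by omega), (hg.2 1 (by omega) 0 (by omega)).2 (by omega)⟩
    · exact Or.inr ⟨g (t - 1), hgC (t - 1) (by omega) (by omega),
        (hg.2 (t - 1) (by omega) t le_rfl).2 (by omega)⟩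
    · exact Or.inl (hgC t ht0 htk)
  have hgS : ∀ t ≤ k, g t ∉ S := fun t ht hs => (hgC' t ht).elim
    (fun hc => hCX hc (hSX hs)) fun ⟨c, hc, hadj⟩ => hanti c hc _ hs hadj
  obtain ⟨H', hH'sub, hH'⟩ := hg.exists_hole_through_clique hS hk hgS
    (fun t ht htk s hs => hanti _ (hgC t ht htk) s hs)
    ((hXS h0X).resolve_left (hgS 0 (by omega))) ((hXS hkX).resolve_left (hgS k le_rfl))
  exact hB H' (hH'sub.trans (union_subset hSB (image_subset_iff.2 hgB))) hH'

theorem chordal_cover_union {C X P X₁ X₂ Y₁ Y₂ : Set V} (hP : G.IsClique P)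
    (hCX : C ⊆ Xᶜ) (hbd : ∀ u ∈ C, ∀ w ∉ X, G.Adj u w → w ∈ C)
    (hanti : ∀ u ∈ C, ∀ w ∈ X ∩ P, ¬ G.Adj u w) (hXS : X ⊆ ClosedNbhd G (X ∩ P))
    (hX₁ : ChordalSet G X₁) (hX₂ : ChordalSet G X₂) (hXi : X₁ ∩ X₂ = P) (hXu : X₁ ∪ X₂ = Cᶜ)
    (hY₁ : ChordalSet G Y₁) (hY₂ : ChordalSet G Y₂) (hYi : Y₁ ∩ Y₂ = X ∩ P)
    (hYu : Y₁ ∪ Y₂ = C ∪ X) (hXY₁ : X ∩ X₁ ⊆ Y₁) (hXY₂ : X ∩ X₂ ⊆ Y₂) :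
    ChordalSet G (X₁ ∪ Y₁) ∧ ChordalSet G (X₂ ∪ Y₂) ∧
      (X₁ ∪ Y₁) ∩ (X₂ ∪ Y₂) = P ∧ (X₁ ∪ Y₁) ∪ (X₂ ∪ Y₂) = univ := by
  have hX₁C : X₁ ⊆ Cᶜ := hXu ▸ subset_union_left
  have hX₂C : X₂ ⊆ Cᶜ := hXu ▸ subset_union_right
  have hY₁CX : Y₁ ⊆ C ∪ X := hYu ▸ subset_union_left
  have hY₂CX : Y₂ ⊆ C ∪ X := hYu ▸ subset_union_right
  have hPX₁ : P ⊆ X₁ := hXi ▸ inter_subset_left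
  have hPX₂ : P ⊆ X₂ := hXi ▸ inter_subset_right
  have hXX : ∀ v ∈ X, v ∈ X₁ ∪ X₂ := fun v hv => hXu ▸ fun hvC => hCX hvC hv
  have hYP : ∀ v ∈ Y₁, v ∈ Y₂ → v ∈ P := fun v h₁ h₂ => (hYi ▸ ⟨h₁, h₂⟩ : v ∈ X ∩ P).2
  have h₁ : X ∩ X₁ = X ∩ Y₁ := subset_antisymm (fun v hv => ⟨hv.1, hXY₁ hv⟩)
    fun v ⟨hvX, hv⟩ => ⟨hvX, (hXX v hvX).elim id fun hv₂ => hPX₁ (hYP v hv (hXY₂ ⟨hvX, hv₂⟩))⟩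
  have h₂ : X ∩ X₂ = X ∩ Y₂ := subset_antisymm (fun v hv => ⟨hv.1, hXY₂ hv⟩)
    fun v ⟨hvX, hv⟩ => ⟨hvX, (hXX v hvX).elim (fun hv₁ => hPX₂ (hYP v (hXY₁ ⟨hvX, hv₁⟩) hv)) id⟩
  have hSY₁ : X ∩ P ⊆ Y₁ := hYi ▸ inter_subset_left
  have hSY₂ : X ∩ P ⊆ Y₂ := hYi ▸ inter_subset_right
  have hS := hP.subset (inter_subset_right (s := X))
  refine ⟨chordalSet_union_of_separation hS inter_subset_left hCX hbd hanti hXS hX₁ hY₁ hX₁C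
      hY₁CX h₁ hSY₁,
    chordalSet_union_of_separation hS inter_subset_left hCX hbd hanti hXS hX₂ hY₂ hX₂C
      hY₂CX h₂ hSY₂, ?_, ?_⟩
  · refine subset_antisymm ?_ fun v hv => ⟨Or.inl (hPX₁ hv), Or.inl (hPX₂ hv)⟩
    rintro v ⟨hv₁ | hv₁, hv₂ | hv₂⟩
    · exact hXi ▸ ⟨hv₁, hv₂⟩
    · have hvX : v ∈ X := (hY₂CX hv₂).resolve_left (hX₁C hv₁)
      exact hXi ▸ ⟨hv₁, (h₂ ▸ ⟨hvX, hv₂⟩ : v ∈ X ∩ X₂).2⟩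
    · have hvX : v ∈ X := (hY₁CX hv₁).resolve_left (hX₂C hv₂)
      exact hXi ▸ ⟨(h₁ ▸ ⟨hvX, hv₁⟩ : v ∈ X ∩ X₁).2, hv₂⟩
    · exact hYP v hv₁ hv₂
  · refine eq_univ_of_forall fun v => ?_
    by_cases hvC : v ∈ C
    · rcases (hYu ▸ Or.inl hvC : v ∈ Y₁ ∪ Y₂) with hv | hv
      · exact Or.inl (Or.inr hv)
      · exact Or.inr (Or.inr hv)
    · rcases (hXu ▸ hvC : v ∈ X₁ ∪ X₂) with hv | hv
      · exact Or.inl (Or.inl hv)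
      · exact Or.inr (Or.inl hv)

end

theorem stmt17_general {V : Type u} (G : SimpleGraph V)
    (hG : MinNonWeaklyFPE G)
    (l : List V) (W1 W2 : Set V) (hw : WeakWitness G l W1 W2)
    (X : Set V) (hcut : ¬ (G.induce (Xᶜ : Set V)).Connected)
    (hconn : (G.induce (X ∩ {v | v ∈ l})).Connected)
    (hXsub : X ⊆ ClosedNbhd G (X ∩ {v | v ∈ l})) :
    ∀ C : Set V, IsCompOf G (Xᶜ) C →
      ∃ u ∈ C, ∃ w ∈ X ∩ {v | v ∈ l}, G.Adj u w := by
  obtain ⟨hl, hlen, hW1, hW2, hWi, hWu, hnoext⟩ := hw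
  intro C hC
  by_contra! hanti
  have hP := hl.isClique hlen
  have hbd : ∀ u ∈ C, ∀ w ∉ X, G.Adj u w → w ∈ C := fun u hu w hw => hC.mem_of_adj hu hw
  obtain ⟨w, hwX, hwC⟩ := hC.exists_notMem hcut
  obtain ⟨⟨s, hs⟩⟩ := hconn.nonempty
  have hNC := closedNbhd_subset_compl hP hC.subset hbd hanti ⟨s, hs⟩
  obtain ⟨X1, X2, hWX1, hWX2, hX1, hX2, hXi, hXu⟩ :=
    (hG.2 Cᶜ fun h => (h ▸ Set.mem_univ _ : _ ∈ Cᶜ) hC.nonempty.some_mem).exists_cover_of_induce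
      ⟨l, hl, hlen, rfl⟩ (fun v hv => hNC (Or.inl hv)) hW1 hW2 hWi
      (by rw [hWu, Set.inter_eq_right.2 hNC])
  obtain ⟨Y1, Y2, hXY1, hXY2, hY1, hY2, hYi, hYu⟩ :=
    (hG.2 (C ∪ X) fun h => (h ▸ Set.mem_univ w : w ∈ C ∪ X).elim hwC hwX).exists_cover_of_induce
      (hl.exists_of_subset hlen Set.inter_subset_right ⟨s, hs⟩)
      (Set.inter_subset_left.trans Set.subset_union_right) (hX1.subset Set.inter_subset_right)
      (hX2.subset Set.inter_subset_right) (by rw [← Set.inter_inter_distrib_left, hXi])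
      (by rw [union_inter_closedNbhd_eq hC.subset Set.inter_subset_left hanti hXsub,
        ← Set.inter_union_distrib_left, hXu,
        Set.inter_eq_left.2 (Set.subset_compl_comm.1 hC.subset)])
  obtain ⟨hZ1, hZ2, hZi, hZu⟩ := chordal_cover_union hP hC.subset hbd hanti hXsub hX1 hX2 hXi
    hXu hY1 hY2 hYi hYu hXY1 hXY2
  exact hnoext ⟨X1 ∪ Y1, X2 ∪ Y2, hWX1.trans Set.subset_union_left,
    hWX2.trans Set.subset_union_left, hZ1, hZ2, hZi, hZu⟩

/-- If `G` is minimal non-weakly FPE with witness path `l` and `X` is a cutset of `G` with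
`X ∩ V(l)` nonempty and connected and `X ⊆ N[X ∩ V(l)]`, then no component of `G \ X` is
anticomplete to `X ∩ V(l)`. -/
theorem stmt17 {V : Type u} [Finite V] (G : SimpleGraph V)
    (hG : MinNonWeaklyFPE G)
    (l : List V) (W1 W2 : Set V) (hw : WeakWitness G l W1 W2)
    (X : Set V) (hcut : ¬ (G.induce (Xᶜ : Set V)).Connected)
    (hconn : (G.induce (X ∩ {v | v ∈ l})).Connected)
    (hXsub : X ⊆ ClosedNbhd G (X ∩ {v | v ∈ l})) :
    ∀ C : Set V, IsCompOf G (Xᶜ) C →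
      ∃ u ∈ C, ∃ w ∈ X ∩ {v | v ∈ l}, G.Adj u w :=
  stmt17_general G hG l W1 W2 hw X hcut hconn hXsub
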